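/- Let h > 0 be real. Let m : ℝ → ℂ be Lebesgue measurable and Lebesgue integrable, let j ∈ ℕ, let a₀,…,a_j ∈ ℂ, N₀,…,N_j ∈ ℕ, and c₀,…,c_j ∈ ℝ with c_k ∉ {ν/h : ν ∈ ℤ} for every k. Suppose f : ℝ → ℂ satisfies f(w) = ∫_ℝ m(x) e^{-2πi w x} dx + ∑_{k=0}^{j} a_k e^{-2πi c_k w} (2πi w)^{N_k} for every w ∈ ℝ. Then for every y ∈ ℝ, lim_{n→∞} (1/2^n) ∑_{k=0}^{n} (n choose k) f(y + k·h) = 0, i.e. ∑_{k=0}^{n} (n choose k) f(y + k·h) = o(2^n). -/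

import Mathlib

/-!
Write `e(t) = exp(2πit)` and treat the summands of `f` separately. For the Fourier integral, the
binomial sum equals `∫ m x * e(-y x) * (1 + e(-h x)) ^ n`, and `‖1 + e(-h x)‖ < 2` off the null
set `h⁻¹ ℤ`, so dominated convergence gives `o(2 ^ n)`. For a shifted derivative of the Dirac
delta the sum is `∑ₖ C(n, k) zᵏ P(k)` with `z = e(-c h) ≠ 1` on the unit circle and `P` a
polynomial; Newton's forward-difference formula rewrites it as
`∑ⱼ Δʲ P(0) C(n, j) zʲ (1 + z) ^ (n - j)`, which is `O(n ^ deg P * ‖1 + z‖ ^ n) = o(2 ^ n)`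
because `‖1 + z‖ < 2`.
-/

open MeasureTheory Filter Finset Topology Polynomial

theorem sum_choose_mul_choose_mul_pow {R : Type*} [CommSemiring R] (n j : ℕ) (z : R) :
    ∑ k ∈ range (n + 1), (n.choose k * k.choose j : R) * z ^ k
      = n.choose j * z ^ j * (1 + z) ^ (n - j) := by
  rcases lt_or_ge n j with hnj | hjn
  · rw [Nat.choose_eq_zero_of_lt hnj, Nat.cast_zero, zero_mul, zero_mul]
    refine sum_eq_zero fun k hk ↦ ?_
    rw [Nat.choose_eq_zero_of_lt ((mem_range.mp hk).trans_le hnj), Nat.cast_zero, mul_zero,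
      zero_mul]
  obtain ⟨r, rfl⟩ := Nat.exists_eq_add_of_le hjn
  rw [add_assoc, sum_range_add, sum_eq_zero fun k hk ↦ by
      rw [Nat.choose_eq_zero_of_lt (mem_range.mp hk), Nat.cast_zero, mul_zero, zero_mul],
    zero_add, Nat.add_sub_cancel_left, add_comm 1 z, add_pow, mul_sum]
  refine sum_congr rfl fun i _ ↦ ?_
  rw [← Nat.cast_mul, Nat.choose_mul (Nat.le_add_right j i), Nat.add_sub_cancel_left,
    Nat.add_sub_cancel_left]
  push_cast
  ring

theorem Polynomial.eval_natCast_eq_sum_fwdDiff_iter {R : Type*} [CommRing R] (P : R[X])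
    (k : ℕ) :
    P.eval (k : R) = ∑ j ∈ range (P.natDegree + 1),
      (k.choose j : R) * (fwdDiff 1)^[j] P.eval 0 := by
  have hdeg : ∀ j ∈ range (k + P.natDegree + 1), j ∉ range (P.natDegree + 1) →
      (k.choose j : R) * (fwdDiff 1)^[j] P.eval 0 = 0 := fun j _ hj ↦ by
    rw [P.fwdDiff_iter_eq_zero_of_degree_lt (by simpa using hj), Pi.zero_apply, mul_zero]
  have hchoose : ∀ j ∈ range (k + P.natDegree + 1), j ∉ range (k + 1) →
      (k.choose j : R) * (fwdDiff 1)^[j] P.eval 0 = 0 := fun j _ hj ↦ by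
    rw [Nat.choose_eq_zero_of_lt (by simpa using hj), Nat.cast_zero, zero_mul]
  rw [sum_subset (by simp) hdeg, ← sum_subset (by simp) hchoose]
  simpa [nsmul_eq_mul] using shift_eq_sum_fwdDiff_iter (1 : R) P.eval k 0

theorem sum_choose_mul_pow_mul_eval {R : Type*} [CommRing R] (P : R[X]) (n : ℕ) (z : R) :
    ∑ k ∈ range (n + 1), (n.choose k : R) * z ^ k * P.eval (k : R)
      = ∑ j ∈ range (P.natDegree + 1),
          (fwdDiff 1)^[j] P.eval 0 * (n.choose j * z ^ j * (1 + z) ^ (n - j)) := by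
  simp_rw [P.eval_natCast_eq_sum_fwdDiff_iter, mul_sum, ← sum_choose_mul_choose_mul_pow, mul_sum]
  rw [sum_comm]
  refine sum_congr rfl fun j _ ↦ sum_congr rfl fun k _ ↦ ?_
  ring

theorem tendsto_choose_mul_pow_sub {R : Type*} [NormedRing R] [HasSummableGeomSeries R] (j : ℕ)
    {r : R} (hr : ‖r‖ < 1) :
    Tendsto (fun n ↦ (n.choose j : R) * r ^ (n - j)) atTop (𝓝 0) := by
  rw [← tendsto_add_atTop_iff_nat j]
  simpa using (summable_choose_mul_geometric_of_norm_lt_one j hr).tendsto_atTop_zero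

theorem tendsto_sum_choose_mul_pow_mul_eval_div_two_pow {𝕜 : Type*} [RCLike 𝕜] (P : 𝕜[X])
    {z : 𝕜} (hz : ‖1 + z‖ < 2) :
    Tendsto (fun n ↦ (∑ k ∈ range (n + 1), (n.choose k : 𝕜) * z ^ k * P.eval (k : 𝕜)) / 2 ^ n)
      atTop (𝓝 0) := by
  have hr : ‖(1 + z) / 2‖ < 1 := by
    rw [norm_div, RCLike.norm_ofNat]; linarith
  have hterm (j : ℕ) : Tendsto (fun n ↦ (fwdDiff 1)^[j] P.eval 0 *
      (n.choose j * z ^ j * (1 + z) ^ (n - j)) / 2 ^ n) atTop (𝓝 0) := by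
    have hlim := (tendsto_choose_mul_pow_sub j hr).const_mul
      ((fwdDiff 1)^[j] P.eval 0 * (z / 2) ^ j)
    rw [mul_zero] at hlim
    refine hlim.congr' ((eventually_ge_atTop j).mono fun n hn ↦ ?_)
    obtain ⟨i, rfl⟩ := Nat.exists_eq_add_of_le' hn
    simp only [Nat.add_sub_cancel, pow_add, div_pow]
    field_simp
  simp_rw [sum_choose_mul_pow_mul_eval, sum_div]
  simpa only [sum_const_zero] using
    tendsto_finsetSum _ fun j (_ : j ∈ range (P.natDegree + 1)) ↦ hterm j

section Integral

variable {α 𝕜 : Type*} [MeasurableSpace α] {μ : Measure α} [RCLike 𝕜] {g w : α → 𝕜}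

theorem tendsto_integral_mul_pow_of_norm_lt_one (hg : Integrable g μ)
    (hw : AEStronglyMeasurable w μ) (hlt : ∀ᵐ x ∂μ, ‖w x‖ < 1) :
    Tendsto (fun n ↦ ∫ x, g x * w x ^ n ∂μ) atTop (𝓝 0) := by
  rw [← integral_zero α 𝕜]
  refine tendsto_integral_of_dominated_convergence (‖g ·‖) (fun n ↦ hg.1.mul (hw.pow n)) hg.norm
    (fun n ↦ hlt.mono fun x hx ↦ ?_) (hlt.mono fun x hx ↦ ?_)
  · rw [norm_mul, norm_pow]
    exact mul_le_of_le_one_right (norm_nonneg _) (pow_le_one₀ (norm_nonneg _) hx.le)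
  · simpa using (tendsto_pow_atTop_nhds_zero_of_norm_lt_one hx).const_mul (g x)

theorem sum_choose_mul_integral_mul_pow (hint : ∀ k, Integrable (fun x ↦ g x * w x ^ k) μ)
    (n : ℕ) :
    ∑ k ∈ range (n + 1), (n.choose k : 𝕜) * ∫ x, g x * w x ^ k ∂μ
      = ∫ x, g x * (1 + w x) ^ n ∂μ := by
  simp_rw [← integral_const_mul]
  rw [← integral_finsetSum _ fun k _ ↦ (hint k).const_mul _]
  refine integral_congr_ae (Eventually.of_forall fun x ↦ ?_)
  simp_rw [add_comm 1 (w x), add_pow, one_pow, mul_one, mul_sum]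
  refine sum_congr rfl fun k _ ↦ ?_
  ring

end Integral

open Complex
open scoped Real

theorem Complex.norm_exp_neg_two_pi_I_mul (a b : ℝ) : ‖exp (-2 * π * I * a * b)‖ = 1 := by
  rw [show -2 * π * I * a * b = (-2 * π * a * b : ℝ) * I by push_cast; ring]
  exact norm_exp_ofReal_mul_I _

theorem Complex.exp_neg_two_pi_I_mul_ne_one {a b : ℝ} (hab : ∀ ν : ℤ, a * b ≠ ν) :
    exp (-2 * π * I * a * b) ≠ 1 := by
  rw [Ne, exp_eq_one_iff]
  rintro ⟨ν, hν⟩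
  refine hab (-ν) ?_
  have : ((a * b : ℝ) : ℂ) = ((-ν : ℤ) : ℂ) := by
    refine mul_left_cancel₀ two_pi_I_ne_zero ?_
    push_cast
    linear_combination -hν
  exact_mod_cast this

theorem Complex.norm_one_add_exp_neg_two_pi_I_mul_lt_two {a b : ℝ} (hab : ∀ ν : ℤ, a * b ≠ ν) :
    ‖1 + exp (-2 * π * I * a * b)‖ < 2 := by
  have hnorm : ‖(1 : ℂ)‖ = ‖exp (-2 * π * I * a * b)‖ := by
    rw [norm_one, norm_exp_neg_two_pi_I_mul]
  have := norm_add_lt_of_not_sameRay ((not_sameRay_iff_of_norm_eq hnorm).mpr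
    (exp_neg_two_pi_I_mul_ne_one hab).symm)
  rwa [← hnorm, norm_one, one_add_one_eq_two] at this

theorem tendsto_sum_choose_mul_exp_mul_pow_div_two_pow (a : ℂ) {c h : ℝ}
    (hch : ∀ ν : ℤ, c * h ≠ ν) (N : ℕ) (y : ℝ) :
    Tendsto (fun n : ℕ ↦ (∑ k ∈ range (n + 1), (n.choose k : ℂ) *
        (a * exp (-2 * π * I * c * (y + k * h : ℝ)) * (2 * π * I * (y + k * h : ℝ)) ^ N)) / 2 ^ n)
      atTop (𝓝 0) := by
  have hlim := (tendsto_sum_choose_mul_pow_mul_eval_div_two_pow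
    ((C (2 * π * I * y) + C (2 * π * I * h) * X) ^ N)
    (norm_one_add_exp_neg_two_pi_I_mul_lt_two hch)).const_mul (a * exp (-2 * π * I * c * y))
  rw [mul_zero] at hlim
  refine hlim.congr fun n ↦ ?_
  rw [mul_div_assoc', mul_sum]
  congr 1
  refine sum_congr rfl fun k _ ↦ ?_
  have hexp : exp (-2 * π * I * c * (y + k * h : ℝ))
      = exp (-2 * π * I * c * y) * exp (-2 * π * I * c * h) ^ k := by
    rw [← exp_nat_mul, ← exp_add]
    push_cast
    ring_nf
  simp only [hexp, eval_pow, eval_add, eval_mul, eval_C, eval_X]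
  push_cast
  ring

theorem tendsto_sum_choose_mul_fourierIntegral_div_two_pow {h : ℝ} (hh : h ≠ 0) {m : ℝ → ℂ}
    (hm : Integrable m) (y : ℝ) :
    Tendsto (fun n : ℕ ↦ (∑ k ∈ range (n + 1), (n.choose k : ℂ) *
        ∫ x : ℝ, m x * exp (-2 * π * I * (y + k * h : ℝ) * x)) / 2 ^ n) atTop (𝓝 0) := by
  have hcont (w : ℝ) : Continuous fun x : ℝ ↦ exp (-2 * π * I * w * x) := by fun_prop
  have hint (w : ℝ) : Integrable fun x ↦ m x * exp (-2 * π * I * w * x) :=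
    hm.mul_bdd (hcont w).aestronglyMeasurable
      (Eventually.of_forall fun x ↦ (norm_exp_neg_two_pi_I_mul w x).le)
  have hexp (k : ℕ) (x : ℝ) : m x * exp (-2 * π * I * (y + k * h : ℝ) * x)
      = m x * exp (-2 * π * I * y * x) * exp (-2 * π * I * h * x) ^ k := by
    rw [← exp_nat_mul, mul_assoc (m x), ← exp_add]
    push_cast
    ring_nf
  have hlt : ∀ᵐ x : ℝ, ‖(1 + exp (-2 * π * I * h * x)) / 2‖ < 1 := by
    filter_upwards [(Set.countable_range fun ν : ℤ ↦ ν / h).ae_notMem volume] with x hx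
    rw [norm_div, RCLike.norm_ofNat, div_lt_one two_pos]
    refine norm_one_add_exp_neg_two_pi_I_mul_lt_two fun ν hν ↦ hx ⟨ν, ?_⟩
    show (ν : ℝ) / h = x
    rw [← hν, mul_div_cancel_left₀ _ hh]
  have hw : Continuous fun x : ℝ ↦ (1 + exp (-2 * π * I * h * x)) / 2 := by fun_prop
  refine (tendsto_integral_mul_pow_of_norm_lt_one (hint y) hw.aestronglyMeasurable hlt).congr
    fun n ↦ ?_
  simp_rw [hexp]
  rw [sum_choose_mul_integral_mul_pow (fun k ↦ by simpa only [hexp] using hint (y + k * h)),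
    ← integral_div]
  simp_rw [div_pow, mul_div_assoc]

theorem forward_binomial_sum_little_o_two_pow_general
    (h : ℝ) (hh : 0 < h)
    (m : ℝ → ℂ) (hmi : Integrable m)
    (j : ℕ) (a : ℕ → ℂ) (N : ℕ → ℕ) (c : ℕ → ℝ)
    (hc : ∀ k ≤ j, ¬ ∃ ν : ℤ, c k = (ν : ℝ) / h)
    (f : ℝ → ℂ)
    (hf : ∀ w : ℝ,
      f w = (∫ x : ℝ, m x * Complex.exp (-2 * (Real.pi : ℂ) * Complex.I * (w : ℂ) * (x : ℂ)))
        + ∑ k ∈ Finset.range (j + 1),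
            a k * Complex.exp (-2 * (Real.pi : ℂ) * Complex.I * (c k : ℂ) * (w : ℂ))
              * (2 * (Real.pi : ℂ) * Complex.I * (w : ℂ)) ^ (N k))
    (y : ℝ) :
    Tendsto (fun n : ℕ =>
        (∑ k ∈ Finset.range (n + 1),
          (n.choose k : ℂ) * f (y + (k : ℝ) * h)) / 2 ^ n)
      atTop (nhds 0) := by
  have hdelta (l : ℕ) (hl : l ∈ range (j + 1)) :=
    tendsto_sum_choose_mul_exp_mul_pow_div_two_pow (a l) (c := c l) (h := h)
      (fun ν hν ↦ hc l (Nat.lt_succ_iff.mp (mem_range.mp hl)) ⟨ν, by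
        rw [← hν, mul_div_cancel_right₀ _ hh.ne']⟩) (N l) y
  have hsum := (tendsto_sum_choose_mul_fourierIntegral_div_two_pow hh.ne' hmi y).add
    (tendsto_finsetSum _ hdelta)
  rw [sum_const_zero, add_zero] at hsum
  refine hsum.congr fun n ↦ ?_
  simp only [hf, mul_add, sum_add_distrib, mul_sum, add_div, sum_div]
  rw [sum_comm (s := range (j + 1))]

theorem forward_binomial_sum_little_o_two_pow
    (h : ℝ) (hh : 0 < h)
    (m : ℝ → ℂ) (hm : Measurable m) (hmi : Integrable m)
    (j : ℕ) (a : ℕ → ℂ) (N : ℕ → ℕ) (c : ℕ → ℝ)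
    (hc : ∀ k ≤ j, ¬ ∃ ν : ℤ, c k = (ν : ℝ) / h)
    (f : ℝ → ℂ)
    (hf : ∀ w : ℝ,
      f w = (∫ x : ℝ, m x * Complex.exp (-2 * (Real.pi : ℂ) * Complex.I * (w : ℂ) * (x : ℂ)))
        + ∑ k ∈ Finset.range (j + 1),
            a k * Complex.exp (-2 * (Real.pi : ℂ) * Complex.I * (c k : ℂ) * (w : ℂ))
              * (2 * (Real.pi : ℂ) * Complex.I * (w : ℂ)) ^ (N k))
    (y : ℝ) :
    Tendsto (fun n : ℕ =>
        (∑ k ∈ Finset.range (n + 1),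
          (n.choose k : ℂ) * f (y + (k : ℝ) * h)) / 2 ^ n)
      atTop (nhds 0) :=
  forward_binomial_sum_little_o_two_pow_general h hh m hmi j a N c hc f hf y
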